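/- arXiv:2108.00458 — 2 statements merged into one kernel-verified Lean document; each statement's English description precedes it below -/
import Mathlib

section
/- The operator ∇ on Cl ⊗_ℂ ℂ[x₁,x₂,y₁,y₂] satisfies ∇² = 0. -/
/- Setup: `Cl` is the Clifford algebra over `ℂ[Θ]` as in the paper, with
`w11, w22, w12, w21` as there.  On `Cl ⊗[ℂ] ℂ[x₁,x₂,y₁,y₂]` (variables
`X 0, X 1 = x₁, x₂` and `X 2, X 3 = y₁, y₂`) we define
`∇(u ⊗ p) = u·w₁₁ ⊗ ∂ₓ₁∂ᵧ₁p + u·w₂₁ ⊗ ∂ₓ₂∂ᵧ₁p + u·w₁₂ ⊗ ∂ₓ₁∂ᵧ₂p + u·w₂₂ ⊗ ∂ₓ₂∂ᵧ₂p`. -/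

noncomputable section

open scoped TensorProduct

def Qf : QuadraticForm (Polynomial ℂ) (Fin 4 → Polynomial ℂ) :=
  QuadraticMap.weightedSumSquares (Polynomial ℂ) (fun _ : Fin 4 => (Polynomial.X : Polynomial ℂ))

abbrev Cl : Type := CliffordAlgebra Qf

def η (i : Fin 4) : Cl := CliffordAlgebra.ι Qf (Pi.single i 1)

def ii : Cl := algebraMap ℂ Cl Complex.I

def w11 : Cl := η 1 + ii * η 0
def w22 : Cl := η 1 - ii * η 0
def w12 : Cl := -(η 3) + ii * η 2
def w21 : Cl := η 3 + ii * η 2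

abbrev P4 : Type := MvPolynomial (Fin 4) ℂ

/-- partial derivative as a `ℂ`-linear map -/
def pd (i : Fin 4) : P4 →ₗ[ℂ] P4 := (MvPolynomial.pderiv i).toLinearMap

/-- `∇(u ⊗ p) = u·w₁₁ ⊗ ∂ₓ₁∂ᵧ₁p + u·w₂₁ ⊗ ∂ₓ₂∂ᵧ₁p + u·w₁₂ ⊗ ∂ₓ₁∂ᵧ₂p + u·w₂₂ ⊗ ∂ₓ₂∂ᵧ₂p` -/
def nabla : Cl ⊗[ℂ] P4 →ₗ[ℂ] Cl ⊗[ℂ] P4 :=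
  TensorProduct.map (LinearMap.mulRight ℂ w11) (pd 0 ∘ₗ pd 2) +
  TensorProduct.map (LinearMap.mulRight ℂ w21) (pd 1 ∘ₗ pd 2) +
  TensorProduct.map (LinearMap.mulRight ℂ w12) (pd 0 ∘ₗ pd 3) +
  TensorProduct.map (LinearMap.mulRight ℂ w22) (pd 1 ∘ₗ pd 3)


open MvPolynomial in
theorem pderiv_comm' {σ R : Type*} [CommSemiring R] (i j : σ) (p : MvPolynomial σ R) :
    pderiv i (pderiv j p) = pderiv j (pderiv i p) := by
  classical
  induction p using MvPolynomial.induction_on with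
  | C a => simp
  | add p q hp hq => simp [hp, hq]
  | mul_X p k hp =>
    simp only [pderiv_mul, map_add, pderiv_mul, hp]
    by_cases hik : i = k <;> by_cases hjk : j = k <;>
      simp [hik, hjk, pderiv_X_self, pderiv_X_of_ne, Ne.symm, hp]

lemma eta_sq (i : Fin 4) : η i * η i = algebraMap (Polynomial ℂ) Cl Polynomial.X := by
  rw [η, CliffordAlgebra.ι_sq_scalar]
  congr 1
  simp [Qf, QuadraticMap.weightedSumSquares_apply, Pi.single_apply, Finset.sum_ite_eq']

lemma eta_anti {i j : Fin 4} (h : i ≠ j) : η i * η j = -(η j * η i) := by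
  have := CliffordAlgebra.ι_mul_ι_add_swap (Q := Qf) (Pi.single i 1) (Pi.single j 1)
  rw [show QuadraticMap.polar Qf (Pi.single i 1) (Pi.single j 1) = 0 from ?_] at this
  · rw [eq_neg_iff_add_eq_zero]; simpa [η] using this
  · simp only [QuadraticMap.polar, Qf, QuadraticMap.weightedSumSquares_apply, Pi.add_apply,
      Pi.single_apply, smul_eq_mul]
    have key : ∀ x : Fin 4,
        Polynomial.X * (((if x = i then (1:Polynomial ℂ) else 0) + if x = j then 1 else 0) *
          ((if x = i then 1 else 0) + if x = j then 1 else 0)) =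
        (if x = i then Polynomial.X else 0) + (if x = j then Polynomial.X else 0) := by
      intro x
      by_cases hx : x = i <;> by_cases hy : x = j <;> subst_vars <;> simp_all
    rw [Finset.sum_congr rfl fun x _ => key x, Finset.sum_add_distrib]
    simp

lemma hii : ii * ii = -1 := by
  rw [ii, ← map_mul, Complex.I_mul_I, map_neg, map_one]

lemma hcomm (x : Cl) : ii * x = x * ii := (Algebra.commutes Complex.I x).symm ▸ rfl

lemma hswap (x y : Cl) : x * (ii * y) = ii * (x * y) := by
  rw [← mul_assoc, ← hcomm x, mul_assoc]

lemma hiii (x : Cl) : ii * (ii * x) = -x := by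
  rw [← mul_assoc, hii, neg_one_mul]

lemma h01 : η 0 * η 1 = -(η 1 * η 0) := eta_anti (by decide)
lemma h23 : η 2 * η 3 = -(η 3 * η 2) := eta_anti (by decide)
lemma h02 : η 0 * η 2 = -(η 2 * η 0) := eta_anti (by decide)
lemma h03 : η 0 * η 3 = -(η 3 * η 0) := eta_anti (by decide)
lemma h12 : η 1 * η 2 = -(η 2 * η 1) := eta_anti (by decide)
lemma h13 : η 1 * η 3 = -(η 3 * η 1) := eta_anti (by decide)

lemma wsq11 : w11 * w11 = 0 := by
  simp only [w11, mul_add, add_mul, hswap, mul_assoc, hiii, eta_sq, h01, mul_neg]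
  abel

lemma wsq22 : w22 * w22 = 0 := by
  simp only [w22, sub_mul, mul_sub, hswap, mul_assoc, hiii, eta_sq, h01, mul_neg]
  abel

lemma wsq12 : w12 * w12 = 0 := by
  simp only [w12, mul_add, add_mul, neg_mul, mul_neg, neg_neg, hswap, mul_assoc, hiii, eta_sq, h23]
  abel

lemma wsq21 : w21 * w21 = 0 := by
  simp only [w21, mul_add, add_mul, hswap, mul_assoc, hiii, eta_sq, h23, mul_neg]
  abel

lemma wac1 : w11 * w21 + w21 * w11 = 0 := by
  simp only [w11, w21, mul_add, add_mul, hswap, mul_assoc, hiii, h12, h13, h02, h03,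
    mul_neg, neg_neg]
  abel

lemma wac2 : w11 * w12 + w12 * w11 = 0 := by
  simp only [w11, w12, mul_add, add_mul, neg_mul, mul_neg, neg_neg, hswap, mul_assoc, hiii,
    h12, h13, h02, h03]
  abel

lemma wac3 : w21 * w22 + w22 * w21 = 0 := by
  simp only [w21, w22, mul_add, add_mul, mul_sub, sub_mul, hswap, mul_assoc, hiii,
    h12, h13, h02, h03, mul_neg, neg_neg]
  abel

lemma wac4 : w12 * w22 + w22 * w12 = 0 := by
  simp only [w12, w22, mul_add, add_mul, mul_sub, sub_mul, neg_mul, mul_neg, neg_neg, hswap,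
    mul_assoc, hiii, h12, h13, h02, h03]
  abel

/-- abbreviation for the scalar `Θ` inside `Cl` -/
def A4 : Cl := algebraMap (Polynomial ℂ) Cl Polynomial.X + algebraMap (Polynomial ℂ) Cl Polynomial.X
  + algebraMap (Polynomial ℂ) Cl Polynomial.X + algebraMap (Polynomial ℂ) Cl Polynomial.X

lemma q1 : w11 * w22 + w22 * w11 = A4 := by
  simp only [w11, w22, A4, mul_add, add_mul, mul_sub, sub_mul, hswap, mul_assoc, hiii, eta_sq,
    h01, mul_neg, neg_neg]
  abel

lemma q2 : w12 * w21 + w21 * w12 = -A4 := by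
  simp only [w12, w21, A4, mul_add, add_mul, neg_mul, mul_neg, neg_neg, hswap, mul_assoc, hiii,
    eta_sq, h23]
  abel

lemma gcomm (i j k l : Fin 4) :
    (pd i ∘ₗ pd j) ∘ₗ (pd k ∘ₗ pd l) = (pd k ∘ₗ pd l) ∘ₗ (pd i ∘ₗ pd j) := by
  apply LinearMap.ext; intro p
  simp only [LinearMap.comp_apply, pd, LinearMap.coe_mk, Derivation.coeFn_coe]
  rw [pderiv_comm' j k, pderiv_comm' i k, pderiv_comm' j l, pderiv_comm' i l]

lemma gmix' (i j k l : Fin 4) :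
    (pd i ∘ₗ pd j) ∘ₗ (pd k ∘ₗ pd l) = (pd i ∘ₗ pd l) ∘ₗ (pd k ∘ₗ pd j) := by
  apply LinearMap.ext; intro p
  simp only [LinearMap.comp_apply, pd, LinearMap.coe_mk, Derivation.coeFn_coe]
  rw [pderiv_comm' j k, pderiv_comm' j l, pderiv_comm' k l]

lemma mr_zero : LinearMap.mulRight ℂ (0 : Cl) = 0 := by
  apply LinearMap.ext; intro x; simp

lemma mr_neg (a : Cl) : LinearMap.mulRight ℂ (-a) = -LinearMap.mulRight ℂ a := by
  apply LinearMap.ext; intro x; simp [mul_neg]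

lemma mr_sub (a b : Cl) :
    LinearMap.mulRight ℂ (a - b) = LinearMap.mulRight ℂ a - LinearMap.mulRight ℂ b := by
  apply LinearMap.ext; intro x; simp [mul_sub]

lemma mapneg (f : Cl →ₗ[ℂ] Cl) (g : P4 →ₗ[ℂ] P4) :
    TensorProduct.map (-f) g = -TensorProduct.map f g := by
  rw [← neg_one_smul ℂ f, TensorProduct.map_smul_left]
  exact neg_one_smul ℂ (TensorProduct.map f g)

lemma mapsub (f₁ f₂ : Cl →ₗ[ℂ] Cl) (g : P4 →ₗ[ℂ] P4) :
    TensorProduct.map (f₁ - f₂) g = TensorProduct.map f₁ g - TensorProduct.map f₂ g := by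
  rw [sub_eq_add_neg, TensorProduct.map_add_left, mapneg]
  abel

/-- `∇² = 0`. -/
theorem nabla_squared : nabla ∘ₗ nabla = 0 := by
  rw [nabla]
  simp only [LinearMap.add_comp, LinearMap.comp_add, ← TensorProduct.map_comp,
    ← LinearMap.mulRight_mul]
  rw [gmix' 1 2 0 3, gmix' 0 3 1 2, gcomm 0 2 1 3, gcomm 0 2 1 2, gcomm 0 2 0 3,
    gcomm 1 2 1 3, gcomm 0 3 1 3]
  rw [wsq11, wsq22, wsq12, wsq21,
    show w21 * w11 = -(w11 * w21) from eq_neg_of_add_eq_zero_right wac1,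
    show w12 * w11 = -(w11 * w12) from eq_neg_of_add_eq_zero_right wac2,
    show w22 * w21 = -(w21 * w22) from eq_neg_of_add_eq_zero_right wac3,
    show w22 * w12 = -(w12 * w22) from eq_neg_of_add_eq_zero_right wac4,
    show w22 * w11 = A4 - w11 * w22 from eq_sub_of_add_eq' q1,
    show w21 * w12 = -A4 - w12 * w21 from eq_sub_of_add_eq' q2]
  simp only [mr_zero, TensorProduct.map_zero_left, mr_neg, mr_sub, mapneg, mapsub]
  abel

end
end

section
/- For every real number s with s ≠ −1 and all natural numbers m, n, one has the identity ∑_{j=0}^{n} (−1)ʲ sʲ (j+m+1)(n−j+1) = [−2/(1+s)³ + (3+n−m)/(1+s)² + (mn+2m)/(1+s)] + (−1)ⁿ s^{n+1} [−2/(1+s)³ + (1−m−n)/(1+s)² + (m+n+1)/(1+s)]. -/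
private lemma aux0 (u : ℝ) (n : ℕ) :
    (∑ j ∈ Finset.range (n + 1), u ^ j) * (1 - u) = 1 - u ^ (n + 1) * 1 := by
  induction n with
  | zero => norm_num
  | succ n ih => rw [Finset.sum_range_succ, add_mul, ih]; ring

private lemma aux1 (u : ℝ) (n : ℕ) :
    (∑ j ∈ Finset.range (n + 1), (j : ℝ) * u ^ j) * (1 - u) ^ 2
      = u - u ^ (n + 1) * (((n : ℝ) + 1) - (n : ℝ) * u) := by
  induction n with
  | zero => norm_num
  | succ n ih => rw [Finset.sum_range_succ, add_mul, ih]; push_cast; ring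

private lemma aux2 (u : ℝ) (n : ℕ) :
    (∑ j ∈ Finset.range (n + 1), (j : ℝ) ^ 2 * u ^ j) * (1 - u) ^ 3
      = u * (1 + u) - u ^ (n + 1) *
          (((n : ℝ) + 1) ^ 2 - (2 * (n : ℝ) ^ 2 + 2 * n - 1) * u + (n : ℝ) ^ 2 * u ^ 2) := by
  induction n with
  | zero => norm_num
  | succ n ih => rw [Finset.sum_range_succ, add_mul, ih]; push_cast; ring

/- STATEMENT 16: for every real `s ≠ −1` and natural numbers `m, n`,
`∑_{j=0}^{n} (−1)ʲ sʲ (j+m+1)(n−j+1)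
  = [−2/(1+s)³ + (3+n−m)/(1+s)² + (mn+2m)/(1+s)]
    + (−1)ⁿ s^{n+1} [−2/(1+s)³ + (1−m−n)/(1+s)² + (m+n+1)/(1+s)]`.
(This is the finite-sum identity arising in the character computation for the
irreducible quotients of type D over `𝒜(K′₄)`.) -/
theorem character_typeD_sum (s : ℝ) (hs : s ≠ -1) (m n : ℕ) :
    ∑ j ∈ Finset.range (n + 1),
        (-1 : ℝ) ^ j * s ^ j * ((j : ℝ) + m + 1) * ((n : ℝ) - j + 1) =
      (-2 / (1 + s) ^ 3 + (3 + (n : ℝ) - m) / (1 + s) ^ 2 + ((m : ℝ) * n + 2 * m) / (1 + s))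
      + (-1 : ℝ) ^ n * s ^ (n + 1) *
        (-2 / (1 + s) ^ 3 + (1 - (m : ℝ) - n) / (1 + s) ^ 2 + ((m : ℝ) + n + 1) / (1 + s)) := by
  have h1 : (1 : ℝ) + s ≠ 0 := by
    intro h; apply hs; linarith
  obtain ⟨u, hu⟩ : ∃ u : ℝ, u = -s := ⟨-s, rfl⟩
  have hu1 : (1 : ℝ) - u ≠ 0 := by rw [hu]; simpa [sub_neg_eq_add] using h1
  have expand : ∑ j ∈ Finset.range (n + 1),
        (-1 : ℝ) ^ j * s ^ j * ((j : ℝ) + m + 1) * ((n : ℝ) - j + 1)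
      = -(∑ j ∈ Finset.range (n + 1), (j : ℝ) ^ 2 * u ^ j)
        + ((n : ℝ) - m) * (∑ j ∈ Finset.range (n + 1), (j : ℝ) * u ^ j)
        + ((m : ℝ) + 1) * ((n : ℝ) + 1) * (∑ j ∈ Finset.range (n + 1), u ^ j) := by
    rw [Finset.mul_sum, Finset.mul_sum, ← Finset.sum_neg_distrib,
      ← Finset.sum_add_distrib, ← Finset.sum_add_distrib]
    refine Finset.sum_congr rfl fun j _ => ?_
    rw [hu, neg_pow]
    ring
  have E0 : (∑ j ∈ Finset.range (n + 1), u ^ j)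
      = (1 - u ^ (n + 1) * 1) / (1 - u) :=
    (eq_div_iff hu1).mpr (aux0 u n)
  have E1 : (∑ j ∈ Finset.range (n + 1), (j : ℝ) * u ^ j)
      = (u - u ^ (n + 1) * (((n : ℝ) + 1) - (n : ℝ) * u)) / (1 - u) ^ 2 :=
    (eq_div_iff (pow_ne_zero 2 hu1)).mpr (aux1 u n)
  have E2 : (∑ j ∈ Finset.range (n + 1), (j : ℝ) ^ 2 * u ^ j)
      = (u * (1 + u) - u ^ (n + 1) *
          (((n : ℝ) + 1) ^ 2 - (2 * (n : ℝ) ^ 2 + 2 * n - 1) * u + (n : ℝ) ^ 2 * u ^ 2))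
        / (1 - u) ^ 3 :=
    (eq_div_iff (pow_ne_zero 3 hu1)).mpr (aux2 u n)
  have hpow : u ^ (n + 1) = -((-1 : ℝ) ^ n * s ^ (n + 1)) := by
    rw [hu, neg_pow]; ring
  rw [expand, E0, E1, E2, hpow, hu]
  rw [sub_neg_eq_add]
  field_simp
  ring
end
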